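/- arXiv:1507.00613 — 5 statements merged into one kernel-verified Lean document; each statement's English description precedes it below -/
import Mathlib

section
/- Let (X,·,d) be a group equipped with a metric d that is invariant, i.e. d(x·y, x·z) = d(y·x, z·x) = d(y,z) for all x,y,z ∈ X. Then for all a,b ∈ X one has γ(a) ⊕ γ(b) = γ(a·b), i.e. for every x ∈ X, inf { d(a,y) + d(b,z) : y·z = x } = d(a·b, x); moreover γ is an isometry for the sup-metric, i.e. sup_{x∈X} |d(a,x) − d(b,x)| = d(a,b) for all a,b ∈ X. Consequently the image X̂ = γ(X) is a group under ⊕ with identity γ(e) and inverse γ(a)⁻¹ = γ(a⁻¹), and γ : X → (X̂, ⊕) is an isometric group isomorphism. -/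
/-!
An invariant metric makes `(y, z) ↦ y * z` one-Lipschitz for the sum metric, so every
factorization `y * z = x` has `d(a * b, x) ≤ d(a, y) + d(b, z)`; the factorization
`x = a * (a⁻¹ * x)` attains the bound. Hence `γ` turns products into inf-convolutions, and the
group laws of `X̂` are those of `X` transported along the injective map `γ`. That `γ` is an
isometry for the sup-metric is the reverse triangle inequality, with equality at `x = b`.
-/

/-- The inf-convolution of two real-valued functions on a set with a
multiplication: `(f ⊕ g)(x) = inf { f y + g z : y * z = x }`. -/
noncomputable def infConv {X : Type*} [Mul X] (f g : X → ℝ) : X → ℝ :=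
  fun x => sInf {r : ℝ | ∃ y z : X, y * z = x ∧ r = f y + g z}

/-- The Kuratowski operator `γ(a) = d(a, ·)`. -/
def kur {X : Type*} [MetricSpace X] (a : X) : X → ℝ := fun x => dist a x

section InvariantMetric

variable {X : Type*} [Group X] [MetricSpace X] [IsIsometricSMul X X] [IsIsometricSMul Xᵐᵒᵖ X]

theorem dist_mul_mul_le_add (a b y z : X) : dist (a * b) (y * z) ≤ dist a y + dist b z :=
  calc dist (a * b) (y * z) ≤ dist (a * b) (a * z) + dist (a * z) (y * z) := dist_triangle _ _ _
    _ = dist a y + dist b z := by rw [dist_mul_left, dist_mul_right, add_comm]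

theorem isLeast_dist_mul_factorizations (a b x : X) :
    IsLeast {r : ℝ | ∃ y z : X, y * z = x ∧ r = dist a y + dist b z} (dist (a * b) x) := by
  refine ⟨⟨a, a⁻¹ * x, mul_inv_cancel_left a x, ?_⟩, ?_⟩
  · rw [dist_self, zero_add, ← dist_mul_left a b, mul_inv_cancel_left]
  · rintro r ⟨y, z, rfl, rfl⟩
    exact dist_mul_mul_le_add a b y z

theorem infConv_kur (a b : X) : infConv (kur a) (kur b) = kur (a * b) :=
  funext fun x => (isLeast_dist_mul_factorizations a b x).csInf_eq

end InvariantMetric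

theorem iSup_abs_dist_sub_dist {X : Type*} [PseudoMetricSpace X] (a b : X) :
    ⨆ x : X, |dist a x - dist b x| = dist a b := by
  have hle : ∀ x, |dist a x - dist b x| ≤ dist a b := abs_dist_sub_le a b
  refine le_antisymm (Real.iSup_le hle dist_nonneg) ?_
  calc dist a b = |dist a b - dist b b| := by rw [dist_self, sub_zero, abs_dist]
    _ ≤ ⨆ x : X, |dist a x - dist b x| := le_ciSup ⟨dist a b, Set.forall_mem_range.2 hle⟩ b

theorem kur_injective {X : Type*} [MetricSpace X] : Function.Injective (kur : X → X → ℝ) :=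
  fun _ b h => dist_eq_zero.1 ((congrFun h b).trans (dist_self b))

/-- For a metric invariant group `X`, the Kuratowski operator satisfies
`γ(a) ⊕ γ(b) = γ(a·b)`, is an isometry for the sup-metric, and hence `X̂ = γ(X)` is a
group under `⊕` (with identity `γ(1)` and inverse `γ(a)⁻¹ = γ(a⁻¹)`) isometrically
isomorphic to `X` via `γ`. -/
theorem kuratowski_isometric_group_iso {X : Type*} [Group X] [MetricSpace X]
    (hleft : ∀ x y z : X, dist (x * y) (x * z) = dist y z)
    (hright : ∀ x y z : X, dist (y * x) (z * x) = dist y z) :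
    (∀ a b : X, infConv (kur a) (kur b) = kur (a * b)) ∧
    (∀ a b : X, (⨆ x : X, |dist a x - dist b x|) = dist a b) ∧
    Function.Injective (fun a : X => kur a) ∧
    (∀ a : X, infConv (kur (1 : X)) (kur a) = kur a ∧ infConv (kur a) (kur (1 : X)) = kur a) ∧
    (∀ a : X, infConv (kur a) (kur a⁻¹) = kur (1 : X) ∧
      infConv (kur a⁻¹) (kur a) = kur (1 : X)) := by
  have : IsIsometricSMul X X := ⟨fun c => Isometry.of_dist_eq (hleft c)⟩
  have : IsIsometricSMul Xᵐᵒᵖ X := ⟨fun c => Isometry.of_dist_eq (hright c.unop)⟩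
  refine ⟨infConv_kur, iSup_abs_dist_sub_dist, kur_injective, fun a => ?_, fun a => ?_⟩
  · simp only [infConv_kur, one_mul, mul_one, and_self]
  · simp only [infConv_kur, mul_inv_cancel, inv_mul_cancel, and_self]
end

section
/- Let (X,d) be a complete metric space, α : X×X → X a map (write y·z for α(y,z)), a ∈ X such that α is d-invariant at a (Δ(a) = {(y,z) : y·z = a} is nonempty and there exist L₁, L₂, L₁', L₂' > 0 with L₂ d(y₁,y₂) ≤ d(y₁·z, y₂·z) ≤ L₁ d(y₁,y₂) for all y₁,y₂ ∈ Δ₁(a), z ∈ Δ₂(a), and L₂' d(z₁,z₂) ≤ d(y·z₁, y·z₂) ≤ L₁' d(z₁,z₂) for all z₁,z₂ ∈ Δ₂(a), y ∈ Δ₁(a)). Let f,g : X → ℝ ∪ {+∞} be proper lower semicontinuous and suppose f ⊕ g has a strong minimum at a. Then there exist ỹ, z̃ ∈ X with ỹ·z̃ = a such that: f(ỹ) + g(z̃) = (f ⊕ g)(a); the map (y,z) ↦ f(y) + g(z), restricted to Δ(a) with the sum metric d((y,z),(y',z')) = d(y,y') + d(z,z'), has a strong minimum at (ỹ,z̃);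 and for every x ∈ X, f(x) − f(ỹ) ≥ (f ⊕ g)(x·z̃) − (f ⊕ g)(a) and g(x) − g(z̃) ≥ (f ⊕ g)(ỹ·x) − (f ⊕ g)(a). -/
/-- Inf-convolution with respect to a binary operation `mul`, for functions with
values in `ℝ ∪ {+∞}` (modelled in `EReal`); the infimum of the empty set is `+∞`. -/
noncomputable def infConvE {X : Type*} (mul : X → X → X) (f g : X → EReal) : X → EReal :=
  fun x => sInf {r : EReal | ∃ y z : X, mul y z = x ∧ r = f y + g z}

/-- A function `h : X → ℝ ∪ {+∞}` has a strong minimum at `x₀`: `h x₀` is finite,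
is the infimum of `h`, and for every `ε > 0` there is `δ > 0` such that
`h x ≤ h x₀ + δ` implies `d(x, x₀) ≤ ε`. -/
def EStrongMin {X : Type*} [MetricSpace X] (h : X → EReal) (x₀ : X) : Prop :=
  h x₀ ≠ ⊤ ∧ h x₀ ≠ ⊥ ∧ (∀ x, h x₀ ≤ h x) ∧
    ∀ ε : ℝ, 0 < ε → ∃ δ : ℝ, 0 < δ ∧ ∀ x, h x ≤ h x₀ + (δ : EReal) → dist x x₀ ≤ ε

/-!
Invariance turns the strong minimum of `f ⊕ g` at `a` into a uniform estimate on
`Δ(a) = {(y, z) | y·z = a}`: if `(y, z)` and `(y', z')` in `Δ(a)` both nearly minimize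
`f y + g z`, then so does one of the cross sums `f y + g z'`, `f y' + g z`, hence the cross
product `y·z'` or `y'·z` is close to `a`, and the co-Lipschitz bounds make
`d(y, y') + d(z, z')` small. So a minimizing sequence in `Δ(a)` is Cauchy; by lower
semicontinuity its limit `(ỹ, z̃)` satisfies `f ỹ + g z̃ ≤ (f ⊕ g)(a)`, which forces
`ỹ·z̃ = a` since `a` is the unique minimizer of `f ⊕ g`. The same estimate with
`(y', z') = (ỹ, z̃)` is the strong minimum on `Δ(a)`, and the last two inequalities follow from
`(f ⊕ g)(x·z̃) ≤ f x + g z̃` and `(f ⊕ g)(ỹ·x) ≤ f ỹ + g x`.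
-/

open Filter Topology

theorem EReal.add_le_or_add_le_of_add_le {u₁ u₂ v₁ v₂ c : EReal} (h₁ : u₁ + v₁ ≤ c)
    (h₂ : u₂ + v₂ ≤ c) : u₁ + v₂ ≤ c ∨ u₂ + v₁ ≤ c := by
  by_contra! h
  have hsum : u₁ + v₂ + (u₂ + v₁) ≤ c + c :=
    calc u₁ + v₂ + (u₂ + v₁) = u₁ + v₁ + (u₂ + v₂) := by ac_rfl
      _ ≤ c + c := add_le_add h₁ h₂
  exact (EReal.add_lt_add h.1 h.2).not_ge hsum

theorem EReal.sub_add_le_sub_of_le_add {A u p v : EReal} (hA : A ≤ u + v)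
    (hp : p ≠ ⊤) (hp' : p ≠ ⊥) (hv : v ≠ ⊤) (hv' : v ≠ ⊥) : A - (p + v) ≤ u - p := by
  lift p to ℝ using ⟨hp, hp'⟩
  lift v to ℝ using ⟨hv, hv'⟩
  rw [← EReal.coe_add, EReal.sub_le_iff_le_add (.inl (EReal.coe_ne_bot _))
    (.inl (EReal.coe_ne_top _)), EReal.coe_add, ← add_assoc, EReal.sub_add_cancel]
  exact hA

theorem LowerSemicontinuous.le_of_tendsto {Y γ ι : Type*} [TopologicalSpace Y] [LinearOrder γ]
    [DenselyOrdered γ] [TopologicalSpace γ] [OrderClosedTopology γ] {F : Y → γ}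
    (hF : LowerSemicontinuous F) {l : Filter ι} [l.NeBot] {u : ι → Y} {t : Y} {m : γ}
    (hu : Tendsto u l (𝓝 t)) (hFu : Tendsto (F ∘ u) l (𝓝 m)) : F t ≤ m :=
  le_of_forall_lt_imp_le_of_dense fun c hc =>
    ge_of_tendsto hFu ((hu.eventually (hF t c hc)).mono fun _ hn => hn.le)

theorem LowerSemicontinuous.ereal_add_prod {Y Z : Type*} [TopologicalSpace Y]
    [TopologicalSpace Z] {f : Y → EReal} {g : Z → EReal} (hf : LowerSemicontinuous f)
    (hg : LowerSemicontinuous g) (hfbot : ∀ y, f y ≠ ⊥) (hgbot : ∀ z, g z ≠ ⊥) :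
    LowerSemicontinuous fun p : Y × Z => f p.1 + g p.2 :=
  (hf.comp continuous_fst).add' (hg.comp continuous_snd) fun p =>
    EReal.continuousAt_add (.inr (hgbot p.2)) (.inl (hfbot p.1))

theorem cauchySeq_of_tendsto_of_sublevel_dist_le {Y : Type*} [PseudoMetricSpace Y]
    {F : Y → EReal} {S : Set Y} {m : EReal} (hm : m ≠ ⊤) (hm' : m ≠ ⊥)
    (hS : ∀ ε > 0, ∃ δ > 0, ∀ p ∈ S, ∀ q ∈ S, F p ≤ m + (δ : ℝ) → F q ≤ m + (δ : ℝ) →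
      dist p q ≤ ε)
    {u : ℕ → Y} (huS : ∀ n, u n ∈ S) (hu : Tendsto (F ∘ u) atTop (𝓝 m)) : CauchySeq u := by
  refine Metric.cauchySeq_iff'.2 fun ε hε => ?_
  obtain ⟨δ, hδ, hsub⟩ := hS (ε / 2) (half_pos hε)
  have hlt : m < m + (δ : ℝ) := by
    lift m to ℝ using ⟨hm, hm'⟩
    exact_mod_cast lt_add_of_pos_right m hδ
  obtain ⟨N, hN⟩ := eventually_atTop.1 (hu.eventually (gt_mem_nhds hlt))
  exact ⟨N, fun n hn => (hsub _ (huS n) _ (huS N) (hN n hn).le (hN N le_rfl).le).trans_lt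
    (half_lt_self hε)⟩

theorem EStrongMin.eq_of_le {X : Type*} [MetricSpace X] {h : X → EReal} {x₀ x : X}
    (hmin : EStrongMin h x₀) (hx : h x ≤ h x₀) : x = x₀ := by
  refine dist_le_zero.1 (le_of_forall_pos_le_add fun ε hε => ?_)
  obtain ⟨δ, hδ, hsub⟩ := hmin.2.2.2 ε hε
  simpa using hsub x (hx.trans (le_add_of_nonneg_right (by exact_mod_cast hδ.le)))

section InfConv

variable {X : Type*} {α : X → X → X} {f g : X → EReal}

theorem infConvE_le_add {x y z : X} (hyz : α y z = x) : infConvE α f g x ≤ f y + g z :=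
  sInf_le ⟨y, z, hyz, rfl⟩

theorem exists_seq_add_tendsto_infConvE {x : X} (hx : infConvE α f g x ≠ ⊤) :
    ∃ y z : ℕ → X, (∀ n, α (y n) (z n) = x) ∧
      Tendsto (fun n => f (y n) + g (z n)) atTop (𝓝 (infConvE α f g x)) := by
  have hne : {r : EReal | ∃ y z : X, α y z = x ∧ r = f y + g z}.Nonempty :=
    Set.nonempty_iff_ne_empty.2 fun h => hx (by simp only [infConvE, h, sInf_empty])
  obtain ⟨u, -, hu, hmem⟩ := exists_seq_tendsto_sInf hne (OrderBot.bddBelow _)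
  choose y z hyz hu_eq using hmem
  obtain rfl : u = fun n => f (y n) + g (z n) := funext hu_eq
  exact ⟨y, z, hyz, hu⟩

end InfConv

/-- The lower (co-Lipschitz) half of the `d`-invariance of `α` at `a`. -/
def IsLowerInvariantAt {X : Type*} [MetricSpace X] (α : X → X → X) (a : X) (L₂ L₂' : ℝ) :
    Prop :=
  (∀ y₁ y₂ z : X, (∃ z', α y₁ z' = a) → (∃ z', α y₂ z' = a) → (∃ y', α y' z = a) →
      L₂ * dist y₁ y₂ ≤ dist (α y₁ z) (α y₂ z)) ∧
    (∀ z₁ z₂ y : X, (∃ y', α y' z₁ = a) → (∃ y', α y' z₂ = a) → (∃ z', α y z' = a) →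
      L₂' * dist z₁ z₂ ≤ dist (α y z₁) (α y z₂))

namespace IsLowerInvariantAt

variable {X : Type*} [MetricSpace X] {α : X → X → X} {a : X} {L₂ L₂' : ℝ}

theorem dist_add_dist_le (hL : IsLowerInvariantAt α a L₂ L₂') (hL₂ : 0 < L₂) (hL₂' : 0 < L₂')
    {y z y' z' : X} (hyz : α y z = a) (hyz' : α y' z' = a) :
    dist y y' + dist z z' ≤ (L₂⁻¹ + L₂'⁻¹) * dist (α y z') a := by
  have hy : L₂ * dist y y' ≤ dist (α y z') a := by
    simpa only [hyz'] using hL.1 y y' z' ⟨z, hyz⟩ ⟨z', hyz'⟩ ⟨y', hyz'⟩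
  have hz : L₂' * dist z z' ≤ dist (α y z') a := by
    simpa only [hyz, dist_comm] using hL.2 z' z y ⟨y', hyz'⟩ ⟨y, hyz⟩ ⟨z, hyz⟩
  rw [add_mul]
  exact add_le_add ((le_inv_mul_iff₀ hL₂).2 hy) ((le_inv_mul_iff₀ hL₂').2 hz)

variable {f g : X → EReal}

theorem exists_pos_dist_add_dist_le (hL : IsLowerInvariantAt α a L₂ L₂') (hL₂ : 0 < L₂)
    (hL₂' : 0 < L₂') (hmin : EStrongMin (infConvE α f g) a) {ε : ℝ} (hε : 0 < ε) :
    ∃ δ > 0, ∀ y z y' z' : X, α y z = a → α y' z' = a →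
      f y + g z ≤ infConvE α f g a + (δ : ℝ) → f y' + g z' ≤ infConvE α f g a + (δ : ℝ) →
      dist y y' + dist z z' ≤ ε := by
  have hK : 0 < L₂⁻¹ + L₂'⁻¹ := by positivity
  obtain ⟨δ, hδ, hsub⟩ := hmin.2.2.2 (ε / (L₂⁻¹ + L₂'⁻¹)) (div_pos hε hK)
  have hcross : ∀ y z y' z' : X, α y z = a → α y' z' = a →
      f y + g z' ≤ infConvE α f g a + (δ : ℝ) → dist y y' + dist z z' ≤ ε := by
    intro y z y' z' hyz hyz' hle
    calc dist y y' + dist z z' ≤ (L₂⁻¹ + L₂'⁻¹) * dist (α y z') a :=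
          hL.dist_add_dist_le hL₂ hL₂' hyz hyz'
      _ ≤ (L₂⁻¹ + L₂'⁻¹) * (ε / (L₂⁻¹ + L₂'⁻¹)) := by
          gcongr
          exact hsub _ ((infConvE_le_add rfl).trans hle)
      _ = ε := mul_div_cancel₀ ε hK.ne'
  refine ⟨δ, hδ, fun y z y' z' hyz hyz' h₁ h₂ => ?_⟩
  rcases EReal.add_le_or_add_le_of_add_le h₁ h₂ with hle | hle
  · exact hcross y z y' z' hyz hyz' hle
  · simpa only [dist_comm] using hcross y' z' y z hyz' hyz hle

theorem exists_add_eq_infConvE [CompleteSpace X] (hL : IsLowerInvariantAt α a L₂ L₂')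
    (hL₂ : 0 < L₂) (hL₂' : 0 < L₂') (hfbot : ∀ x, f x ≠ ⊥) (hgbot : ∀ x, g x ≠ ⊥)
    (hflsc : LowerSemicontinuous f) (hglsc : LowerSemicontinuous g)
    (hmin : EStrongMin (infConvE α f g) a) :
    ∃ ty tz : X, α ty tz = a ∧ f ty + g tz = infConvE α f g a := by
  obtain ⟨y, z, hyz, hlim⟩ := exists_seq_add_tendsto_infConvE hmin.1
  have hcauchy : CauchySeq fun n => (y n, z n) := by
    refine cauchySeq_of_tendsto_of_sublevel_dist_le (F := fun p : X × X => f p.1 + g p.2)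
      (S := {p : X × X | α p.1 p.2 = a}) hmin.1 hmin.2.1 (fun ε hε => ?_) hyz hlim
    obtain ⟨δ, hδ, hsub⟩ := hL.exists_pos_dist_add_dist_le hL₂ hL₂' hmin hε
    refine ⟨δ, hδ, fun p hp q hq hpδ hqδ => ?_⟩
    rw [Prod.dist_eq]
    exact (max_le_add_of_nonneg dist_nonneg dist_nonneg).trans (hsub _ _ _ _ hp hq hpδ hqδ)
  obtain ⟨t, ht⟩ := cauchySeq_tendsto_of_complete hcauchy
  have hle : f t.1 + g t.2 ≤ infConvE α f g a :=
    (hflsc.ereal_add_prod hglsc hfbot hgbot).le_of_tendsto ht hlim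
  have hta : α t.1 t.2 = a := hmin.eq_of_le ((infConvE_le_add rfl).trans hle)
  exact ⟨t.1, t.2, hta, hle.antisymm (infConvE_le_add hta)⟩

end IsLowerInvariantAt

theorem strongMin_infConv_strong_attainment_general {X : Type*} [MetricSpace X] [CompleteSpace X]
    (α : X → X → X) (a : X)
    (hinv : ∃ L₁ L₂ L₁' L₂' : ℝ, 0 < L₁ ∧ 0 < L₂ ∧ 0 < L₁' ∧ 0 < L₂' ∧
      (∀ y₁ y₂ z : X, (∃ z', α y₁ z' = a) → (∃ z', α y₂ z' = a) → (∃ y', α y' z = a) →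
        L₂ * dist y₁ y₂ ≤ dist (α y₁ z) (α y₂ z) ∧
          dist (α y₁ z) (α y₂ z) ≤ L₁ * dist y₁ y₂) ∧
      (∀ z₁ z₂ y : X, (∃ y', α y' z₁ = a) → (∃ y', α y' z₂ = a) → (∃ z', α y z' = a) →
        L₂' * dist z₁ z₂ ≤ dist (α y z₁) (α y z₂) ∧
          dist (α y z₁) (α y z₂) ≤ L₁' * dist z₁ z₂))
    (f g : X → EReal)
    (hfbot : ∀ x, f x ≠ ⊥) (hgbot : ∀ x, g x ≠ ⊥)
    (hflsc : LowerSemicontinuous f) (hglsc : LowerSemicontinuous g)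
    (hmin : EStrongMin (infConvE α f g) a) :
    ∃ ty tz : X, α ty tz = a ∧
      f ty + g tz = infConvE α f g a ∧
      (∀ y z : X, α y z = a → f ty + g tz ≤ f y + g z) ∧
      (f ty + g tz ≠ ⊤ ∧ f ty + g tz ≠ ⊥) ∧
      (∀ ε : ℝ, 0 < ε → ∃ δ : ℝ, 0 < δ ∧ ∀ y z : X, α y z = a →
        f y + g z ≤ f ty + g tz + (δ : EReal) → dist y ty + dist z tz ≤ ε) ∧
      (∀ x : X, infConvE α f g (α x tz) - infConvE α f g a ≤ f x - f ty) ∧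
      (∀ x : X, infConvE α f g (α ty x) - infConvE α f g a ≤ g x - g tz) := by
  obtain ⟨L₁, L₂, L₁', L₂', -, hL₂, -, hL₂', hiy, hiz⟩ := hinv
  have hL : IsLowerInvariantAt α a L₂ L₂' :=
    ⟨fun y₁ y₂ z h₁ h₂ h₃ => (hiy y₁ y₂ z h₁ h₂ h₃).1,
      fun z₁ z₂ y h₁ h₂ h₃ => (hiz z₁ z₂ y h₁ h₂ h₃).1⟩
  obtain ⟨ty, tz, hta, heq⟩ := hL.exists_add_eq_infConvE hL₂ hL₂' hfbot hgbot hflsc hglsc hmin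
  have hfin : f ty + g tz ≠ ⊤ := heq ▸ hmin.1
  obtain ⟨hfty, hgtz⟩ := (EReal.add_ne_top_iff_ne_top₂ (hfbot ty) (hgbot tz)).1 hfin
  refine ⟨ty, tz, hta, heq, fun y z hyz => heq ▸ infConvE_le_add hyz, ⟨hfin, heq ▸ hmin.2.1⟩,
    fun ε hε => ?_, fun x => ?_, fun x => ?_⟩
  · obtain ⟨δ, hδ, hsub⟩ := hL.exists_pos_dist_add_dist_le hL₂ hL₂' hmin hε
    refine ⟨δ, hδ, fun y z hyz hle => hsub y z ty tz hyz hta (heq ▸ hle) ?_⟩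
    exact heq ▸ le_add_of_nonneg_right (by exact_mod_cast hδ.le)
  · rw [← heq]
    exact EReal.sub_add_le_sub_of_le_add (infConvE_le_add rfl) hfty (hfbot ty) hgtz (hgbot tz)
  · rw [← heq, add_comm (f ty)]
    exact EReal.sub_add_le_sub_of_le_add ((infConvE_le_add rfl).trans_eq (add_comm _ _))
      hgtz (hgbot tz) hfty (hfbot ty)

/-- if `α` is `d`-invariant at `a` and the inf-convolution `f ⊕ g` of two
proper lsc functions has a strong minimum at `a`, then there are `ỹ, z̃` with
`ỹ·z̃ = a`, `f(ỹ) + g(z̃) = (f ⊕ g)(a)`, the map `(y,z) ↦ f(y) + g(z)` restricted to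
`Δ(a)` (equipped with the sum metric) has a strong minimum at `(ỹ, z̃)`, and
`f(x) − f(ỹ) ≥ (f⊕g)(x·z̃) − (f⊕g)(a)`, `g(x) − g(z̃) ≥ (f⊕g)(ỹ·x) − (f⊕g)(a)`
for all `x`. -/
theorem strongMin_infConv_strong_attainment {X : Type*} [MetricSpace X] [CompleteSpace X]
    (α : X → X → X) (a : X)
    (hne : ∃ y z : X, α y z = a)
    (hinv : ∃ L₁ L₂ L₁' L₂' : ℝ, 0 < L₁ ∧ 0 < L₂ ∧ 0 < L₁' ∧ 0 < L₂' ∧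
      (∀ y₁ y₂ z : X, (∃ z', α y₁ z' = a) → (∃ z', α y₂ z' = a) → (∃ y', α y' z = a) →
        L₂ * dist y₁ y₂ ≤ dist (α y₁ z) (α y₂ z) ∧
          dist (α y₁ z) (α y₂ z) ≤ L₁ * dist y₁ y₂) ∧
      (∀ z₁ z₂ y : X, (∃ y', α y' z₁ = a) → (∃ y', α y' z₂ = a) → (∃ z', α y z' = a) →
        L₂' * dist z₁ z₂ ≤ dist (α y z₁) (α y z₂) ∧
          dist (α y z₁) (α y z₂) ≤ L₁' * dist z₁ z₂))
    (f g : X → EReal)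
    (hfbot : ∀ x, f x ≠ ⊥) (hgbot : ∀ x, g x ≠ ⊥)
    (hfproper : ∃ x, f x ≠ ⊤) (hgproper : ∃ x, g x ≠ ⊤)
    (hflsc : LowerSemicontinuous f) (hglsc : LowerSemicontinuous g)
    (hmin : EStrongMin (infConvE α f g) a) :
    ∃ ty tz : X, α ty tz = a ∧
      f ty + g tz = infConvE α f g a ∧
      (∀ y z : X, α y z = a → f ty + g tz ≤ f y + g z) ∧
      (f ty + g tz ≠ ⊤ ∧ f ty + g tz ≠ ⊥) ∧
      (∀ ε : ℝ, 0 < ε → ∃ δ : ℝ, 0 < δ ∧ ∀ y z : X, α y z = a →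
        f y + g z ≤ f ty + g tz + (δ : EReal) → dist y ty + dist z tz ≤ ε) ∧
      (∀ x : X, infConvE α f g (α x tz) - infConvE α f g a ≤ f x - f ty) ∧
      (∀ x : X, infConvE α f g (α ty x) - infConvE α f g a ≤ g x - g tz) :=
  strongMin_infConv_strong_attainment_general α a hinv f g hfbot hgbot hflsc hglsc hmin
end

section
/- Let (X,·,d) be a group which is complete and metric invariant, with identity element e. Then (Lip¹(X), ⊕), the set of 1-Lipschitz bounded-below real functions with the inf-convolution, is a monoid with identity element γ(e) = d(e,·), and a function f ∈ Lip¹(X) is invertible in this monoid (i.e. there exists g ∈ Lip¹(X) with f ⊕ g = g ⊕ f = γ(e)) if and only if there exist a ∈ X and c ∈ ℝ such that f = d(a,·) + c. -/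
/-- The set `Lip¹(X)` of 1-Lipschitz bounded-below real-valued functions. -/
def LipOne (X : Type*) [MetricSpace X] : Set (X → ℝ) :=
  {f | (∀ x y, |f x - f y| ≤ dist x y) ∧ BddBelow (Set.range f)}

open Set Filter Topology

section InfConv

variable {X : Type*} {f g : X → ℝ}

theorem infConv_le [Mul X] (hf : BddBelow (range f)) (hg : BddBelow (range g)) {x y z : X}
    (hyz : y * z = x) : infConv f g x ≤ f y + g z := by
  obtain ⟨cf, hcf⟩ := hf
  obtain ⟨cg, hcg⟩ := hg
  refine csInf_le ⟨cf + cg, ?_⟩ ⟨y, z, hyz, rfl⟩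
  rintro r ⟨y', z', -, rfl⟩
  exact add_le_add (hcf ⟨y', rfl⟩) (hcg ⟨z', rfl⟩)

theorem infConv_eq_of_forall_le [Mul X] {x y z : X} (hyz : y * z = x)
    (hle : ∀ y' z', y' * z' = x → f y + g z ≤ f y' + g z') : infConv f g x = f y + g z :=
  IsLeast.csInf_eq ⟨⟨y, z, hyz, rfl⟩, by rintro _ ⟨y', z', hyz', rfl⟩; exact hle y' z' hyz'⟩

theorem infConv_add_const_add_const [Mul X] {c c' : ℝ} (hc : c + c' = 0) :
    infConv (fun x => f x + c) (fun x => g x + c') = infConv f g := by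
  have hsum : ∀ y z, f y + c + (g z + c') = f y + g z := fun y z => by linear_combination hc
  funext x
  simp only [infConv, hsum]

variable [MulOneClass X]

theorem le_infConv {x : X} {r : ℝ} (h : ∀ y z, y * z = x → r ≤ f y + g z) :
    r ≤ infConv f g x := by
  refine le_csInf ⟨f 1 + g x, 1, x, one_mul x, rfl⟩ ?_
  rintro s ⟨y, z, hyz, rfl⟩
  exact h y z hyz

theorem exists_add_lt_of_infConv_lt {x : X} {r : ℝ} (h : infConv f g x < r) :
    ∃ y z, y * z = x ∧ f y + g z < r := by
  by_contra! hge
  exact (le_infConv hge).not_gt h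

theorem bddBelow_range_infConv (hf : BddBelow (range f)) (hg : BddBelow (range g)) :
    BddBelow (range (infConv f g)) := by
  obtain ⟨cf, hcf⟩ := hf
  obtain ⟨cg, hcg⟩ := hg
  refine ⟨cf + cg, ?_⟩
  rintro _ ⟨x, rfl⟩
  exact le_infConv fun y z _ => add_le_add (hcf ⟨y, rfl⟩) (hcg ⟨z, rfl⟩)

end InfConv

theorem infConv_assoc {X : Type*} [Monoid X] {f g h : X → ℝ} (hf : BddBelow (range f))
    (hg : BddBelow (range g)) (hh : BddBelow (range h)) :
    infConv (infConv f g) h = infConv f (infConv g h) := by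
  funext x
  apply le_antisymm
  · refine le_infConv fun y v hyv => ?_
    rw [← sub_le_iff_le_add']
    refine le_infConv fun z w hzw => ?_
    rw [sub_le_iff_le_add', ← add_assoc]
    calc infConv (infConv f g) h x ≤ infConv f g (y * z) + h w :=
          infConv_le (bddBelow_range_infConv hf hg) hh (by rw [mul_assoc, hzw, hyv])
      _ ≤ f y + g z + h w := by grw [infConv_le hf hg rfl]
  · refine le_infConv fun u w huw => ?_
    rw [← sub_le_iff_le_add]
    refine le_infConv fun y z hyz => ?_
    rw [sub_le_iff_le_add, add_assoc]
    calc infConv f (infConv g h) x ≤ f y + infConv g h (z * w) :=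
          infConv_le hf (bddBelow_range_infConv hg hh) (by rw [← mul_assoc, hyz, huw])
      _ ≤ f y + (g z + h w) := by grw [infConv_le hg hh rfl]

theorem mem_lipOne_iff {X : Type*} [MetricSpace X] {f : X → ℝ} :
    f ∈ LipOne X ↔ LipschitzWith 1 f ∧ BddBelow (range f) := by
  simp only [LipOne, mem_ofPred_eq, lipschitzWith_iff_dist_le_mul, NNReal.coe_one, one_mul,
    Real.dist_eq]

theorem dist_add_const_mem_lipOne {X : Type*} [MetricSpace X] (a : X) (c : ℝ) :
    (fun x => dist a x + c) ∈ LipOne X := by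
  refine mem_lipOne_iff.2 ⟨?_, c, ?_⟩
  · exact LipschitzWith.of_le_add fun x y => by linarith [dist_triangle a y x, dist_comm x y]
  · rintro _ ⟨x, rfl⟩
    linarith [dist_nonneg (x := a) (y := x)]

theorem LipschitzWith.le_add_dist {α : Type*} [PseudoMetricSpace α] {f : α → ℝ}
    (hf : LipschitzWith 1 f) (x y : α) : f x ≤ f y + dist x y := by
  simpa using hf.le_add_mul x y

theorem exists_eq_zero_of_dist_le_add {α : Type*} [PseudoMetricSpace α] [CompleteSpace α]
    {φ : α → ℝ} (hφ : Continuous φ) (hdist : ∀ x y, dist x y ≤ φ x + φ y)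
    (hsmall : ∀ ε > 0, ∃ x, φ x < ε) : ∃ x, φ x = 0 := by
  have hnonneg : ∀ x, 0 ≤ φ x := fun x => by linarith [hdist x x, dist_self x]
  choose u hu using fun n : ℕ => hsmall (1 / (n + 1)) Nat.one_div_pos_of_nat
  have hφu : Tendsto (φ ∘ u) atTop (𝓝 0) :=
    squeeze_zero (fun n => hnonneg _) (fun n => (hu n).le) tendsto_one_div_add_atTop_nhds_zero_nat
  have hcauchy : CauchySeq u := by
    refine Metric.cauchySeq_iff'.2 fun ε hε => ?_
    obtain ⟨N, hN⟩ := eventually_atTop.1 (hφu.eventually (gt_mem_nhds (half_pos hε)))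
    have hN : ∀ n ≥ N, φ (u n) < ε / 2 := hN
    exact ⟨N, fun n hn => (hdist _ _).trans_lt (by linarith [hN n hn, hN N le_rfl])⟩
  obtain ⟨x, hx⟩ := cauchySeq_tendsto_of_complete hcauchy
  exact ⟨x, tendsto_nhds_unique ((hφ.tendsto x).comp hx) hφu⟩

section InvariantMetric

variable {X : Type*} [Group X] [MetricSpace X] {f g : X → ℝ}

theorem lipschitzWith_infConv [IsIsometricSMul X X] (hfb : BddBelow (range f))
    (hg : LipschitzWith 1 g) (hgb : BddBelow (range g)) : LipschitzWith 1 (infConv f g) := by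
  refine LipschitzWith.of_le_add fun x x' => ?_
  rw [← sub_le_iff_le_add]
  refine le_infConv fun y z hyz => ?_
  have hd : dist (y⁻¹ * x) z = dist x x' := by
    rw [← dist_mul_left y, mul_inv_cancel_left, hyz]
  linarith [hd ▸ hg.le_add_dist (y⁻¹ * x) z, infConv_le hfb hgb (mul_inv_cancel_left y x)]

theorem infConv_mem_lipOne [IsIsometricSMul X X] (hf : f ∈ LipOne X) (hg : g ∈ LipOne X) :
    infConv f g ∈ LipOne X := by
  rw [mem_lipOne_iff] at *
  exact ⟨lipschitzWith_infConv hf.2 hg.1 hg.2, bddBelow_range_infConv hf.2 hg.2⟩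

variable [IsIsometricSMul X X] [IsIsometricSMul Xᵐᵒᵖ X]

theorem infConv_dist_left (a : X) (hf : LipschitzWith 1 f) :
    infConv (dist a ·) f = fun x => f (a⁻¹ * x) := by
  funext x
  calc infConv (dist a ·) f x = dist a a + f (a⁻¹ * x) :=
        infConv_eq_of_forall_le (mul_inv_cancel_left a x) fun y z hyz => ?_
    _ = f (a⁻¹ * x) := by rw [dist_self, zero_add]
  have hd : dist (a⁻¹ * x) z = dist a y := by
    rw [← hyz, ← dist_mul_left a, mul_inv_cancel_left, dist_mul_right, dist_comm]
  linarith [hd ▸ hf.le_add_dist (a⁻¹ * x) z, dist_self a]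

theorem infConv_dist_right (a : X) (hf : LipschitzWith 1 f) :
    infConv f (dist a ·) = fun x => f (x * a⁻¹) := by
  funext x
  calc infConv f (dist a ·) x = f (x * a⁻¹) + dist a a :=
        infConv_eq_of_forall_le (inv_mul_cancel_right x a) fun y z hyz => ?_
    _ = f (x * a⁻¹) := by rw [dist_self, add_zero]
  have hd : dist (x * a⁻¹) y = dist a z := by
    rw [← hyz, ← dist_mul_right _ _ a, inv_mul_cancel_right, dist_mul_left, dist_comm]
  linarith [hd ▸ hf.le_add_dist (x * a⁻¹) y, dist_self a]

theorem infConv_dist_dist (a b : X) : infConv (dist a ·) (dist b ·) = (dist (a * b) ·) := by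
  rw [infConv_dist_left a (LipschitzWith.dist_right b)]
  funext x
  rw [← dist_mul_left a, mul_inv_cancel_left]

theorem exists_eq_dist_add_of_infConv_eq_dist_one [CompleteSpace X] (hf : f ∈ LipOne X)
    (hg : g ∈ LipOne X) (hfg : infConv f g = (dist 1 ·)) : ∃ a c, ∀ x, f x = dist a x + c := by
  rw [mem_lipOne_iff] at hf hg
  have key : ∀ y z, dist z y ≤ f y + g z⁻¹ := fun y z => by
    have h := infConv_le hf.2 hg.2 (x := y * z⁻¹) rfl
    simp only [hfg] at h
    rwa [← dist_mul_right _ _ z, one_mul, inv_mul_cancel_right] at h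
  have hdist : ∀ y z, dist y z ≤ f y + g y⁻¹ + (f z + g z⁻¹) := fun y z => by
    linarith [key y z, key z y, key y y, key z z, dist_self y, dist_self z, dist_comm y z]
  have hsmall : ∀ ε > 0, ∃ y, f y + g y⁻¹ < ε := fun ε hε => by
    obtain ⟨y, z, hyz, hlt⟩ :=
      exists_add_lt_of_infConv_lt (f := f) (g := g) (x := 1) (by simpa [hfg] using hε)
    exact ⟨y, by rwa [← eq_inv_of_mul_eq_one_right hyz]⟩
  obtain ⟨b, hb⟩ := exists_eq_zero_of_dist_le_add (φ := fun y => f y + g y⁻¹)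
    (hf.1.continuous.add (hg.1.continuous.comp isometry_inv.continuous)) hdist hsmall
  refine ⟨b, f b, fun x => le_antisymm ?_ ?_⟩
  · linarith [hf.1.le_add_dist x b, dist_comm x b]
  · linarith [key x b]

end InvariantMetric

/-- on a complete metric invariant group, `(Lip¹(X), ⊕)` is a monoid with
identity `γ(1) = d(1,·)`, and `f ∈ Lip¹(X)` is invertible in this monoid iff
`f = d(a,·) + c` for some `a ∈ X`, `c ∈ ℝ`. -/
theorem lipOne_monoid_units {X : Type*} [Group X] [MetricSpace X] [CompleteSpace X]
    (hleft : ∀ x y z : X, dist (x * y) (x * z) = dist y z)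
    (hright : ∀ x y z : X, dist (y * x) (z * x) = dist y z) :
    (∀ f ∈ LipOne X, ∀ g ∈ LipOne X, infConv f g ∈ LipOne X) ∧
    (∀ f ∈ LipOne X, ∀ g ∈ LipOne X, ∀ h ∈ LipOne X,
       infConv (infConv f g) h = infConv f (infConv g h)) ∧
    (∀ f ∈ LipOne X,
       infConv (fun x => dist (1 : X) x) f = f ∧ infConv f (fun x => dist (1 : X) x) = f) ∧
    (∀ f ∈ LipOne X,
       (∃ g ∈ LipOne X, infConv f g = (fun x => dist (1 : X) x) ∧
          infConv g f = (fun x => dist (1 : X) x)) ↔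
       ∃ (a : X) (c : ℝ), ∀ x, f x = dist a x + c) := by
  have : IsIsometricSMul X X := ⟨fun c => Isometry.of_dist_eq (hleft c)⟩
  have : IsIsometricSMul Xᵐᵒᵖ X := ⟨fun c => Isometry.of_dist_eq (hright c.unop)⟩
  refine ⟨fun f hf g hg => infConv_mem_lipOne hf hg,
    fun f hf g hg h hh => infConv_assoc hf.2 hg.2 hh.2, fun f hf => ?_, fun f hf => ?_⟩
  · have hlip := (mem_lipOne_iff.1 hf).1
    simp [infConv_dist_left 1 hlip, infConv_dist_right 1 hlip]
  refine ⟨fun ⟨g, hg, hfg, _⟩ => exists_eq_dist_add_of_infConv_eq_dist_one hf hg hfg, ?_⟩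
  rintro ⟨a, c, hfa⟩
  obtain rfl : f = fun x => dist a x + c := funext hfa
  refine ⟨fun x => dist a⁻¹ x + -c, dist_add_const_mem_lipOne a⁻¹ (-c), ?_, ?_⟩
  · rw [infConv_add_const_add_const (add_neg_cancel c), infConv_dist_dist, mul_inv_cancel]
  · rw [infConv_add_const_add_const (neg_add_cancel c), infConv_dist_dist, inv_mul_cancel]
end

section
/- Let (X,·,d) be a group which is complete and metric invariant, and let f, g be 1-Lipschitz bounded-below real functions on X such that f has a strong minimum at x_f and g has a strong minimum at x_g. Then f ⊕ g has a strong minimum at x_f · x_g; that is, argmin(f ⊕ g) = argmin(f) · argmin(g). -/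
/-- A real-valued function `h` has a strong minimum at `x₀`: `h x₀ = inf h` and for
every `ε > 0` there is `δ > 0` such that `h x ≤ h x₀ + δ` implies `d(x, x₀) ≤ ε`. -/
def StrongMin {X : Type*} [MetricSpace X] (h : X → ℝ) (x₀ : X) : Prop :=
  (∀ x, h x₀ ≤ h x) ∧
    ∀ ε : ℝ, 0 < ε → ∃ δ : ℝ, 0 < δ ∧ ∀ x, h x ≤ h x₀ + δ → dist x x₀ ≤ ε

/-!
Every term `f y + g z` of the infimum defining `(f ⊕ g) x` is at least `f a + g b`, which is
attained at `x = a * b`. A nearly minimal value of `f ⊕ g` at `x` comes from a splitting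
`x = y * z` with `(y, z)` a nearly minimal point of `(y, z) ↦ f y + g z`, which has a strong
minimum at `(a, b)`; so `y` is close to `a`, `z` is close to `b`, and by bi-invariance of the
metric `y * z` is close to `a * b`.
-/

section Invariant

variable {X : Type*} [Mul X] [PseudoMetricSpace X]

lemma dist_mul_mul_le_of_invariant
    (hleft : ∀ x y z : X, dist (x * y) (x * z) = dist y z)
    (hright : ∀ x y z : X, dist (y * x) (z * x) = dist y z) (a b c d : X) :
    dist (a * b) (c * d) ≤ dist a c + dist b d :=
  calc dist (a * b) (c * d) ≤ dist (a * b) (a * d) + dist (a * d) (c * d) := dist_triangle _ _ _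
    _ = dist a c + dist b d := by rw [hleft, hright, add_comm]

end Invariant

section InfConv

variable {X : Type*} {f g : X → ℝ} {a b : X}

lemma add_le_infConv [MulOneClass X] (hf : ∀ y, f a ≤ f y) (hg : ∀ z, g b ≤ g z) (x : X) :
    f a + g b ≤ infConv f g x :=
  le_csInf ⟨f x + g 1, x, 1, mul_one x, rfl⟩ <| by
    rintro r ⟨y, z, -, rfl⟩
    exact add_le_add (hf y) (hg z)

lemma infConv_mul_eq_add [MulOneClass X] (hf : ∀ y, f a ≤ f y) (hg : ∀ z, g b ≤ g z) :
    infConv f g (a * b) = f a + g b := by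
  refine le_antisymm (csInf_le ⟨f a + g b, ?_⟩ ⟨a, b, rfl, rfl⟩) (add_le_infConv hf hg _)
  rintro _ ⟨y, z, -, rfl⟩
  exact add_le_add (hf y) (hg z)

lemma exists_mul_eq_add_lt_of_infConv_lt [MulOneClass X] {x : X} {r : ℝ}
    (h : infConv f g x < r) : ∃ y z, y * z = x ∧ f y + g z < r := by
  unfold infConv at h
  obtain ⟨_, ⟨y, z, hyz, rfl⟩, hr⟩ :=
    exists_lt_of_csInf_lt (by exact ⟨f x + g 1, x, 1, mul_one x, rfl⟩) h
  exact ⟨y, z, hyz, hr⟩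

end InfConv

lemma StrongMin.prod_add {X Y : Type*} [MetricSpace X] [MetricSpace Y]
    {f : X → ℝ} {g : Y → ℝ} {a : X} {b : Y} (hf : StrongMin f a) (hg : StrongMin g b) :
    StrongMin (fun p : X × Y => f p.1 + g p.2) (a, b) := by
  refine ⟨fun p => add_le_add (hf.1 p.1) (hg.1 p.2), fun ε hε => ?_⟩
  obtain ⟨δf, hδf, hfε⟩ := hf.2 ε hε
  obtain ⟨δg, hδg, hgε⟩ := hg.2 ε hε
  refine ⟨min δf δg, lt_min hδf hδg, fun ⟨y, z⟩ hyz => ?_⟩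
  have hfy : f y ≤ f a + δf := by linarith [hg.1 z, min_le_left δf δg]
  have hgz : g z ≤ g b + δg := by linarith [hf.1 y, min_le_right δf δg]
  rw [Prod.dist_eq]
  exact max_le (hfε y hfy) (hgε z hgz)

theorem strongMin_infConv_mul_general {X : Type*} [Group X] [MetricSpace X]
    (hleft : ∀ x y z : X, dist (x * y) (x * z) = dist y z)
    (hright : ∀ x y z : X, dist (y * x) (z * x) = dist y z)
    (f g : X → ℝ)
    (xf xg : X) (hxf : StrongMin f xf) (hxg : StrongMin g xg) :
    StrongMin (infConv f g) (xf * xg) := by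
  have hval := infConv_mul_eq_add hxf.1 hxg.1
  refine ⟨fun x => hval ▸ add_le_infConv hxf.1 hxg.1 x, fun ε hε => ?_⟩
  obtain ⟨δ, hδ, hclose⟩ := (hxf.prod_add hxg).2 (ε / 2) (half_pos hε)
  refine ⟨δ / 2, half_pos hδ, fun x hx => ?_⟩
  obtain ⟨y, z, rfl, hyz⟩ :=
    exists_mul_eq_add_lt_of_infConv_lt (f := f) (g := g) (r := f xf + g xg + δ) (by linarith)
  obtain ⟨hy, hz⟩ : dist y xf ≤ ε / 2 ∧ dist z xg ≤ ε / 2 := by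
    simpa only [Prod.dist_eq, max_le_iff] using hclose (y, z) hyz.le
  calc dist (y * z) (xf * xg) ≤ dist y xf + dist z xg :=
        dist_mul_mul_le_of_invariant hleft hright y z xf xg
    _ ≤ ε := by linarith

/-- on a complete metric invariant group, if `f` and `g` are 1-Lipschitz
bounded-below functions with strong minima at `x_f` and `x_g` respectively, then
`f ⊕ g` has a strong minimum at `x_f * x_g`, i.e.
`argmin (f ⊕ g) = argmin f · argmin g`. -/
theorem strongMin_infConv_mul {X : Type*} [Group X] [MetricSpace X] [CompleteSpace X]
    (hleft : ∀ x y z : X, dist (x * y) (x * z) = dist y z)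
    (hright : ∀ x y z : X, dist (y * x) (z * x) = dist y z)
    (f g : X → ℝ)
    (hf : ∀ x y : X, |f x - f y| ≤ dist x y) (hfb : BddBelow (Set.range f))
    (hg : ∀ x y : X, |g x - g y| ≤ dist x y) (hgb : BddBelow (Set.range g))
    (xf xg : X) (hxf : StrongMin f xf) (hxg : StrongMin g xg) :
    StrongMin (infConv f g) (xf * xg) :=
  strongMin_infConv_mul_general hleft hright f g xf xg hxf hxg
end

section
/- Let (X,d) be a metric space, let f and (fₙ) be 1-Lipschitz bounded-below real functions on X such that f has a strong minimum at x_f and each fₙ has a strong minimum at xₙ. If ρ(fₙ, f) → 0, where ρ(f,g) = sup_{x∈X} |f(x) − g(x)| / (1 + |f(x) − g(x)|), then d(xₙ, x_f) → 0. In other words, the map argmin : (S(X), ρ) → (X,d) sending a function with a strong minimum to its unique minimizer is continuous. -/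
/-- The metric `ρ(f,g) = sup_x |f x − g x| / (1 + |f x − g x|)`. -/
noncomputable def rhoDist {X : Type*} (f g : X → ℝ) : ℝ :=
  ⨆ x : X, |f x - g x| / (1 + |f x - g x|)

open Filter Topology

lemma div_one_add_lt_div_one_add_iff {s t : ℝ} (hs : 0 ≤ s) (ht : 0 ≤ t) :
    t / (1 + t) < s / (1 + s) ↔ t < s := by
  rw [div_lt_div_iff₀ (by linarith) (by linarith)]
  constructor <;> intro h <;> nlinarith

lemma div_one_add_abs_le_rhoDist {X : Type*} (f g : X → ℝ) (x : X) :
    |f x - g x| / (1 + |f x - g x|) ≤ rhoDist f g := by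
  refine le_ciSup (f := fun y => |f y - g y| / (1 + |f y - g y|)) ⟨1, ?_⟩ x
  rintro _ ⟨y, rfl⟩
  rw [div_le_one (by positivity)]
  linarith

lemma tendstoUniformly_of_tendsto_rhoDist {ι X : Type*} {l : Filter ι} {F : ι → X → ℝ}
    {f : X → ℝ} (h : Tendsto (fun i => rhoDist (F i) f) l (𝓝 0)) :
    TendstoUniformly F f l := by
  rw [Metric.tendstoUniformly_iff]
  intro ε hε
  have hs : (0 : ℝ) < ε / (1 + ε) := by positivity
  filter_upwards [(tendsto_order.1 h).2 _ hs] with i hi x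
  rw [dist_comm, Real.dist_eq]
  exact (div_one_add_lt_div_one_add_iff hε.le (abs_nonneg _)).1
    ((div_one_add_abs_le_rhoDist _ _ x).trans_lt hi)

lemma StrongMin.tendsto_of_tendstoUniformly {ι X : Type*} [MetricSpace X] {l : Filter ι}
    {F : ι → X → ℝ} {f : X → ℝ} {x₀ : X} {x : ι → X} (hf : StrongMin f x₀)
    (hx : ∀ i y, F i (x i) ≤ F i y) (hF : TendstoUniformly F f l) :
    Tendsto x l (𝓝 x₀) := by
  rw [Metric.tendsto_nhds]
  intro ε hε
  obtain ⟨δ, hδ, hδε⟩ := hf.2 (ε / 2) (by positivity)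
  filter_upwards [Metric.tendstoUniformly_iff.1 hF (δ / 2) (by positivity)] with i hi
  have hclose : ∀ y, |F i y - f y| < δ / 2 := fun y => by
    rw [← Real.dist_eq, dist_comm]; exact hi y
  have hnear_min : f (x i) ≤ f x₀ + δ := by
    have h₁ := (abs_lt.1 (hclose (x i))).1
    have h₂ := (abs_lt.1 (hclose x₀)).2
    linarith [hx i x₀]
  linarith [hδε (x i) hnear_min]

theorem argmin_continuous_general {X : Type*} [MetricSpace X]
    (f : X → ℝ) (fn : ℕ → X → ℝ)
    (xf : X) (hxf : StrongMin f xf)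
    (xn : ℕ → X) (hxn : ∀ n, StrongMin (fn n) (xn n))
    (hconv : Filter.Tendsto (fun n => rhoDist (fn n) f) Filter.atTop (nhds 0)) :
    Filter.Tendsto (fun n => dist (xn n) xf) Filter.atTop (nhds 0) :=
  tendsto_iff_dist_tendsto_zero.1 <|
    hxf.tendsto_of_tendstoUniformly (fun n => (hxn n).1) (tendstoUniformly_of_tendsto_rhoDist hconv)

/-- if `f` and the `fₙ` are 1-Lipschitz bounded-below functions with
strong minima at `x_f` and `xₙ` respectively, and `ρ(fₙ, f) → 0`, then
`d(xₙ, x_f) → 0`: the map `argmin : (S(X), ρ) → (X, d)` is continuous. -/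
theorem argmin_continuous {X : Type*} [MetricSpace X]
    (f : X → ℝ) (fn : ℕ → X → ℝ)
    (hf : ∀ x y : X, |f x - f y| ≤ dist x y) (hfb : BddBelow (Set.range f))
    (hfn : ∀ n, ∀ x y : X, |fn n x - fn n y| ≤ dist x y)
    (hfnb : ∀ n, BddBelow (Set.range (fn n)))
    (xf : X) (hxf : StrongMin f xf)
    (xn : ℕ → X) (hxn : ∀ n, StrongMin (fn n) (xn n))
    (hconv : Filter.Tendsto (fun n => rhoDist (fn n) f) Filter.atTop (nhds 0)) :
    Filter.Tendsto (fun n => dist (xn n) xf) Filter.atTop (nhds 0) :=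
  argmin_continuous_general f fn xf hxf xn hxn hconv
end
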